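/- arXiv:2404.03377 — 4 statements merged into one kernel-verified Lean document; each statement's English description precedes it below -/
import Mathlib

section
/- For all natural numbers l, m with 1 ≤ l < m, there exists an injective function ext from the set of l-element subsets of {0,...,2m-1} to the set of (l+1)-element subsets of {0,...,2m-1} such that for every l-element subset S, S ⊆ ext(S). -/
/-- For all natural numbers `l`, `m` with `1 ≤ l < m`, there exists an injective function
`ext` from the `l`-element subsets of `{0,...,2m-1}` to the `(l+1)`-element subsets
such that `S ⊆ ext S` for every `l`-element subset `S`. -/
theorem extension_function_exists (l m : ℕ) (hl : 1 ≤ l) (hlm : l < m) :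
    ∃ ext : {S : Finset (Fin (2 * m)) // S.card = l} →
            {S : Finset (Fin (2 * m)) // S.card = l + 1},
      Function.Injective ext ∧ ∀ S, S.1 ⊆ (ext S).1 := by
  classical
  let r : {S : Finset (Fin (2 * m)) // S.card = l} →
      {S : Finset (Fin (2 * m)) // S.card = l + 1} → Prop := fun a b => a.1 ⊆ b.1
  suffices h : ∀ A : Finset {S : Finset (Fin (2 * m)) // S.card = l},
      A.card ≤ (Finset.univ.filter fun b => ∃ a ∈ A, r a b).card by
    obtain ⟨f, hf, hfr⟩ := (Fintype.all_card_le_filter_rel_iff_exists_injective r).mp h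
    exact ⟨f, hf, hfr⟩
  intro A
  set B := Finset.univ.filter fun b => ∃ a ∈ A, r a b with hB
  have hm2 : ∀ a ∈ A, (2 * m - l : ℕ) ≤ (B.bipartiteAbove r a).card := by
    intro a ha
    have hcompl : (a.1ᶜ).card = 2 * m - l := by
      rw [Finset.card_compl, a.2]
      simp
    have himg : (a.1ᶜ.image fun x => insert x a.1) ⊆
        (B.bipartiteAbove r a).image Subtype.val := by
      intro T hT
      simp only [Finset.mem_image] at hT
      obtain ⟨x, hx, rfl⟩ := hT
      rw [Finset.mem_compl] at hx
      have hcard : (insert x a.1).card = l + 1 := by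
        rw [Finset.card_insert_of_notMem hx, a.2]
      refine Finset.mem_image.mpr ⟨⟨insert x a.1, hcard⟩, ?_, rfl⟩
      rw [Finset.mem_bipartiteAbove]
      refine ⟨Finset.mem_filter.mpr ⟨Finset.mem_univ _, a, ha, ?_⟩, ?_⟩ <;>
        exact Finset.subset_insert _ _
    calc (2 * m - l : ℕ) = (a.1ᶜ).card := hcompl.symm
      _ = (a.1ᶜ.image fun x => insert x a.1).card := by
          rw [Finset.card_image_of_injOn]
          intro x hx y hy hxy
          rw [Finset.mem_coe, Finset.mem_compl] at hx hy
          simp only at hxy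
          have : x ∈ insert y a.1 := by rw [← hxy]; exact Finset.mem_insert_self x a.1
          rcases Finset.mem_insert.mp this with h | h
          · exact h
          · exact absurd h hx
      _ ≤ ((B.bipartiteAbove r a).image Subtype.val).card := Finset.card_le_card himg
      _ = (B.bipartiteAbove r a).card := Finset.card_image_of_injective _ Subtype.val_injective
  have hn2 : ∀ b ∈ B, (A.bipartiteBelow r b).card ≤ l + 1 := by
    intro b _
    calc (A.bipartiteBelow r b).card
        = ((A.bipartiteBelow r b).image Subtype.val).card :=
          (Finset.card_image_of_injective _ Subtype.val_injective).symm
      _ ≤ (b.1.powersetCard l).card := by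
          apply Finset.card_le_card
          intro T hT
          simp only [Finset.mem_image] at hT
          obtain ⟨a, ha, rfl⟩ := hT
          rw [Finset.mem_bipartiteBelow] at ha
          exact Finset.mem_powersetCard.mpr ⟨ha.2, a.2⟩
      _ = l + 1 := by
          rw [Finset.card_powersetCard, b.2, Nat.choose_succ_self_right]
  have key := Finset.card_mul_le_card_mul r hm2 hn2
  have hle : l + 1 ≤ 2 * m - l := by omega
  have hpos : 0 < 2 * m - l := by omega
  calc A.card = A.card * (2 * m - l) / (2 * m - l) := by rw [Nat.mul_div_cancel _ hpos]
    _ ≤ B.card * (2 * m - l) / (2 * m - l) := by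
        apply Nat.div_le_div_right
        exact key.trans (Nat.mul_le_mul_left _ hle)
    _ = B.card := Nat.mul_div_cancel _ hpos
end

section
/- The bipartite inclusion graph between l-element subsets and (l+1)-element subsets of a 2m-element set (edges given by set inclusion), for 1 ≤ l < m, satisfies Hall's marriage condition for the side of l-element subsets: for every collection W of l-element subsets, the number of (l+1)-element subsets containing some member of W is at least |W|. -/
open scoped Classical

/-- The bipartite inclusion graph between `l`-element and `(l+1)`-element subsets of a
`2m`-element set satisfies Hall's marriage condition on the side of `l`-element subsets:
for every collection `W` of `l`-element subsets, the number of `(l+1)`-element subsets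
containing some member of `W` is at least `|W|`. -/
theorem hall_condition_inclusion_graph (l m : ℕ) (hl : 1 ≤ l) (hlm : l < m)
    (W : Finset (Finset (Fin (2 * m)))) (hW : ∀ S ∈ W, S.card = l) :
    W.card ≤
      (Finset.univ.filter
        (fun T : Finset (Fin (2 * m)) => T.card = l + 1 ∧ ∃ S ∈ W, S ⊆ T)).card := by
  classical
  set t := (Finset.univ.filter
        (fun T : Finset (Fin (2 * m)) => T.card = l + 1 ∧ ∃ S ∈ W, S ⊆ T)) with ht
  have key : W.card * (2 * m - l) ≤ t.card * (l + 1) := by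
    apply Finset.card_mul_le_card_mul (fun S T => S ⊆ T)
    · intro S hS
      have hScard := hW S hS
      have hmap : (Finset.univ \ S).image (fun x => insert x S) ⊆
          t.bipartiteAbove (fun S T => S ⊆ T) S := by
        intro T hT
        simp only [Finset.mem_image, Finset.mem_sdiff, Finset.mem_univ, true_and] at hT
        obtain ⟨x, hx, rfl⟩ := hT
        rw [Finset.mem_bipartiteAbove]
        refine ⟨?_, Finset.subset_insert _ _⟩
        simp only [ht, Finset.mem_filter, Finset.mem_univ, true_and]
        exact ⟨by rw [Finset.card_insert_of_notMem hx, hScard], S, hS, Finset.subset_insert _ _⟩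
      calc 2 * m - l = (Finset.univ \ S).card := by
              rw [Finset.card_sdiff_of_subset (Finset.subset_univ _), hScard]
              rw [Finset.card_univ, Fintype.card_fin]
        _ = ((Finset.univ \ S).image (fun x => insert x S)).card := by
              rw [Finset.card_image_of_injOn]
              intro x hx y hy hxy
              simp only [Finset.coe_sdiff, Finset.coe_univ, Set.mem_diff, Finset.mem_coe] at hx hy
              have hxy' : insert x S = insert y S := hxy
              have : x ∈ insert y S := hxy' ▸ Finset.mem_insert_self x S
              rcases Finset.mem_insert.1 this with h | h
              · exact h
              · exact absurd h hx.2
        _ ≤ _ := Finset.card_le_card hmap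
    · intro T hT
      have : W.bipartiteBelow (fun S T => S ⊆ T) T ⊆ T.powersetCard l := by
        intro S hS
        rw [Finset.mem_bipartiteBelow] at hS
        rw [Finset.mem_powersetCard]
        exact ⟨hS.2, hW S hS.1⟩
      calc (W.bipartiteBelow (fun S T => S ⊆ T) T).card ≤ (T.powersetCard l).card :=
            Finset.card_le_card this
        _ = (l + 1).choose l := by
            rw [Finset.card_powersetCard]
            simp only [ht, Finset.mem_filter] at hT
            rw [hT.2.1]
        _ = l + 1 := Nat.choose_succ_self_right l
  have hle : l + 1 ≤ 2 * m - l := by omega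
  have : W.card * (l + 1) ≤ t.card * (l + 1) :=
    le_trans (Nat.mul_le_mul_left _ hle) key
  exact Nat.le_of_mul_le_mul_right this (by omega)
end

section
/- There exists an injective function ext defined on all nonempty subsets of {0,...,2M-1} of size at most M-1 such that ext(S) ⊇ S and |ext(S)| = |S| + 1 for every such S, where M ≥ 2. -/
/-!
Join each `S` in the domain to its one-point extensions `T ⊇ S`, `|T| = |S| + 1`. Such an `S` has
`2M - |S| ≥ M + 1` extensions, while each extension `T` lies above only `|T| ≤ M` sets, so by
double counting every family of admissible sets has at least as many extensions as members.
Hall's theorem then gives an injective choice of extension, for all sizes `|S|` at once.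
-/

open Finset

theorem Fintype.exists_injective_rel_of_degree_le_degree {α β : Type*} [Fintype α] [Fintype β]
    (r : α → β → Prop) [DecidableRel r] {d : ℕ} (hd : 0 < d)
    (h_above : ∀ a, d ≤ #{b | r a b}) (h_below : ∀ a b, r a b → #{a' | r a' b} ≤ d) :
    ∃ f : α → β, Function.Injective f ∧ ∀ a, r a (f a) := by
  refine (Fintype.all_card_le_filter_rel_iff_exists_injective r).mp fun s => ?_
  refine Nat.le_of_mul_le_mul_right (card_mul_le_card_mul r (fun a _ => ?_) fun b hb => ?_) hd
  · refine (h_above a).trans (card_le_card fun b hb => ?_)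
    simp only [mem_filter, mem_univ, true_and] at hb
    exact (mem_bipartiteAbove r).mpr ⟨mem_filter.mpr ⟨mem_univ b, a, ‹_›, hb⟩, hb⟩
  · obtain ⟨a, -, hab⟩ := by simpa using hb
    exact (card_le_card (filter_subset_filter _ (subset_univ s))).trans (h_below a b hab)

namespace Finset

variable {α : Type*} [DecidableEq α]

theorem card_filter_superset_card_add_one [Fintype α] (s : Finset α) :
    #{t : Finset α | s ⊆ t ∧ #s + 1 = #t} = Fintype.card α - #s := by
  have : ({t : Finset α | s ⊆ t ∧ #s + 1 = #t} : Finset _) = sᶜ.image (insert · s) := by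
    ext t
    simp [← exists_eq_insert_iff]
  rw [this, card_image_of_injOn s.insert_inj_on', card_compl]

theorem card_filter_subset_card_add_one [Fintype α] (t : Finset α) :
    #{s : Finset α | s ⊆ t ∧ #s + 1 = #t} = #t := by
  have : ({s : Finset α | s ⊆ t ∧ #s + 1 = #t} : Finset _) = t.image t.erase := by
    ext s
    simp only [mem_filter, mem_univ, true_and, mem_image, ← exists_eq_insert_iff]
    constructor
    · rintro ⟨a, ha, rfl⟩
      exact ⟨a, mem_insert_self a s, erase_insert ha⟩
    · rintro ⟨a, ha, rfl⟩
      exact ⟨a, notMem_erase a t, insert_erase ha⟩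
  rw [this, card_image_of_injOn t.erase_injOn]

end Finset

/-- There is an injective function `ext` defined on all nonempty subsets of `{0,...,2M-1}`
of size at most `M-1` such that `S ⊆ ext S` and `|ext S| = |S| + 1`, where `M ≥ 2`. -/
theorem extension_function_union (M : ℕ) (hM : 2 ≤ M) :
    ∃ ext : {S : Finset (Fin (2 * M)) // S.Nonempty ∧ S.card ≤ M - 1} → Finset (Fin (2 * M)),
      Function.Injective ext ∧ ∀ S, S.1 ⊆ ext S ∧ (ext S).card = S.1.card + 1 := by
  let r (S : {S : Finset (Fin (2 * M)) // S.Nonempty ∧ S.card ≤ M - 1}) (T : Finset (Fin (2 * M))) :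
      Prop :=
    S.1 ⊆ T ∧ #S.1 + 1 = #T
  obtain ⟨ext, hinj, hr⟩ := Fintype.exists_injective_rel_of_degree_le_degree r (d := M) (by omega)
    (fun S => by
      rw [card_filter_superset_card_add_one, Fintype.card_fin]
      have := S.2.2
      omega)
    (fun S T hST => calc
      #{S' | r S' T} ≤ #{s : Finset (Fin (2 * M)) | s ⊆ T ∧ #s + 1 = #T} :=
        card_le_card_of_injOn Subtype.val (fun S' hS' => by simpa [r] using hS')
          Subtype.val_injective.injOn
      _ ≤ M := by
        rw [card_filter_subset_card_add_one, ← hST.2]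
        have := S.2.2
        omega)
  exact ⟨ext, hinj, fun S => ⟨(hr S).1, (hr S).2.symm⟩⟩
end

section
/- Let p, q be monotone polynomial functions on the naturals with p(x) ≥ 10x and q(x) ≥ 10x for all x ≥ 1, and define f(x) = 20 · 2^{2p(x)} · q(x) · ln(2) · x². Then for every natural number x ≥ 1: x · (f(x) · 2^{q(x)})^x · (1 - 2^{-p(x)})^{f(x) - x + 1} < 1. -/
/-!
Put `y = 2^{-p}` and `a = 2^p`. Since `1 - y ≤ e^{-y}`, the last factor is at most
`exp (-y (f - x + 1))`, and `y f = 20 a q ln 2 · x²`. On the other side the crude bounds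
`20 ≤ 2⁵`, `ln 2 ≤ 1`, `q ≤ 2^q`, `x ≤ 2^x` give
`x (f 2^q)^x ≤ 2^{x (6 + 2p + 2q + 2x)}`. Comparing exponents, it remains to see
`8 + 2p + 2q + 2x < 20 a q x`, which follows from `a > p` and `q, x ≥ 1`.
-/

open Real

lemma one_sub_rpow_le_exp_neg_mul {y e : ℝ} (hy : y ≤ 1) (he : 0 ≤ e) :
    (1 - y) ^ e ≤ exp (-(y * e)) :=
  calc (1 - y) ^ e ≤ exp (-y) ^ e := rpow_le_rpow (by linarith) (one_sub_le_exp_neg y) he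
    _ = exp (-(y * e)) := by rw [← exp_mul, neg_mul]

lemma natCast_le_two_pow (n : ℕ) : (n : ℝ) ≤ 2 ^ n := by
  exact_mod_cast n.lt_two_pow_self.le

lemma two_pow_eq_exp (n : ℕ) : (2 : ℝ) ^ n = exp (log 2 * n) := by
  rw [mul_comm, exp_nat_mul, exp_log two_pos]

noncomputable def modelSizeBound (P Q X : ℕ) : ℝ :=
  20 * (2 : ℝ) ^ (2 * P) * (Q : ℝ) * log 2 * (X : ℝ) ^ 2

lemma modelSizeBound_nonneg (P Q X : ℕ) : 0 ≤ modelSizeBound P Q X := by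
  have := log_pos one_lt_two
  unfold modelSizeBound
  positivity

lemma natCast_le_modelSizeBound (P : ℕ) {Q : ℕ} (hQ : 1 ≤ Q) (X : ℕ) :
    (X : ℝ) ≤ modelSizeBound P Q X := by
  have hL : 1 / 20 ≤ log 2 := by linarith [log_two_gt_d9]
  have hQ' : (1 : ℝ) ≤ Q := by exact_mod_cast hQ
  calc (X : ℝ) ≤ 20 * 1 * 1 * (1 / 20) * X ^ 2 := by
        norm_num
        exact_mod_cast Nat.le_self_pow two_ne_zero X
    _ ≤ modelSizeBound P Q X := by
        unfold modelSizeBound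
        gcongr
        exact one_le_pow₀ one_le_two

lemma modelSizeBound_mul_two_pow_le (P Q X : ℕ) :
    modelSizeBound P Q X * 2 ^ Q ≤ 2 ^ (5 + 2 * P + 2 * Q + 2 * X) := by
  have hL : log 2 ≤ 1 := by linarith [log_two_lt_d9]
  have hX : (X : ℝ) ^ 2 ≤ 2 ^ (2 * X) := by
    rw [pow_mul']; exact pow_le_pow_left₀ X.cast_nonneg (natCast_le_two_pow X) 2
  calc modelSizeBound P Q X * 2 ^ Q
      ≤ 2 ^ 5 * 2 ^ (2 * P) * 2 ^ Q * 1 * 2 ^ (2 * X) * 2 ^ Q := by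
        unfold modelSizeBound
        gcongr
        · norm_num
        · exact natCast_le_two_pow Q
    _ = 2 ^ (5 + 2 * P + 2 * Q + 2 * X) := by ring

lemma natCast_mul_pow_le_exp (P Q X : ℕ) :
    (X : ℝ) * (modelSizeBound P Q X * 2 ^ Q) ^ X
      ≤ exp (log 2 * (X * (6 + 2 * P + 2 * Q + 2 * X) : ℕ)) := by
  rw [← two_pow_eq_exp]
  calc (X : ℝ) * (modelSizeBound P Q X * 2 ^ Q) ^ X
      ≤ 2 ^ X * (2 ^ (5 + 2 * P + 2 * Q + 2 * X)) ^ X := by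
        have := modelSizeBound_nonneg P Q X
        gcongr
        · exact natCast_le_two_pow X
        · exact modelSizeBound_mul_two_pow_le P Q X
    _ = 2 ^ (X * (6 + 2 * P + 2 * Q + 2 * X)) := by
        rw [← pow_mul, ← pow_add]
        ring_nf

lemma linear_lt_two_pow_mul {P Q X : ℕ} (hQ : 1 ≤ Q) (hX : 1 ≤ X) :
    8 + 2 * P + 2 * Q + 2 * X < 20 * 2 ^ P * Q * X := by
  have hP : P + 1 ≤ 2 ^ P := P.lt_two_pow_self
  have hQX : Q + X ≤ 2 * (Q * X) := by nlinarith
  nlinarith [Nat.mul_le_mul hP (Nat.mul_le_mul hQ hX), Nat.mul_le_mul_left (2 ^ P) hQX]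

lemma log_two_mul_lt_inv_two_pow_mul {P Q X : ℕ} (hQ : 1 ≤ Q) (hX : 1 ≤ X) :
    log 2 * (X * (6 + 2 * P + 2 * Q + 2 * X) : ℕ)
      < ((2 : ℝ) ^ P)⁻¹ * (modelSizeBound P Q X - X + 1) := by
  have hL : 1 / 2 < log 2 := by linarith [log_two_gt_d9]
  have ha : 1 ≤ (2 : ℝ) ^ P := one_le_pow₀ one_le_two
  have hXR : (1 : ℝ) ≤ X := by exact_mod_cast hX
  have hlin : (8 + 2 * P + 2 * Q + 2 * X : ℝ) < 20 * 2 ^ P * Q * X := by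
    exact_mod_cast linear_lt_two_pow_mul (P := P) hQ hX
  have hinv : ((2 : ℝ) ^ P)⁻¹ * (X - 1) ≤ X - 1 :=
    mul_le_of_le_one_left (by linarith) (inv_le_one_of_one_le₀ ha)
  have hsplit : ((2 : ℝ) ^ P)⁻¹ * (modelSizeBound P Q X - X + 1)
      = log 2 * X * (20 * 2 ^ P * Q * X) - ((2 : ℝ) ^ P)⁻¹ * (X - 1) := by
    unfold modelSizeBound; field_simp; ring
  rw [hsplit]; push_cast
  nlinarith [mul_lt_mul_of_pos_left hlin (by positivity : 0 < log 2 * X)]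

theorem natCast_mul_pow_mul_one_sub_rpow_lt_one (P : ℕ) {Q X : ℕ}
    (hQ : 1 ≤ Q) (hX : 1 ≤ X) :
    (X : ℝ) * (modelSizeBound P Q X * 2 ^ Q) ^ X
      * (1 - (2 : ℝ) ^ (-(P : ℝ))) ^ (modelSizeBound P Q X - X + 1) < 1 := by
  have ha : ((2 : ℝ) ^ P)⁻¹ ≤ 1 := inv_le_one_of_one_le₀ (one_le_pow₀ one_le_two)
  have he : 0 ≤ modelSizeBound P Q X - X + 1 := by
    linarith [natCast_le_modelSizeBound P hQ X]
  rw [rpow_neg zero_le_two, rpow_natCast]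
  calc _ ≤ exp (log 2 * (X * (6 + 2 * P + 2 * Q + 2 * X) : ℕ))
        * exp (-(((2 : ℝ) ^ P)⁻¹ * (modelSizeBound P Q X - X + 1))) :=
        mul_le_mul (natCast_mul_pow_le_exp P Q X) (one_sub_rpow_le_exp_neg_mul ha he)
          (rpow_nonneg (by linarith) _) (exp_pos _).le
    _ < 1 := by
        rw [← exp_add, exp_lt_one_iff, add_neg_lt_iff_lt_add, zero_add]
        exact log_two_mul_lt_inv_two_pow_mul hQ hX

theorem auf_model_size_bound_general (p q : ℕ → ℕ)
    (hq : ∀ x : ℕ, 1 ≤ x → 10 * x ≤ q x)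
    (f : ℕ → ℝ)
    (hf : ∀ x : ℕ, f x = 20 * (2 : ℝ) ^ (2 * p x) * (q x : ℝ) * Real.log 2 * (x : ℝ) ^ 2) :
    ∀ x : ℕ, 1 ≤ x →
      (x : ℝ) * (f x * (2 : ℝ) ^ (q x)) ^ x *
        (1 - (2 : ℝ) ^ (-(p x : ℝ))) ^ (f x - (x : ℝ) + 1) < 1 := by
  intro x hx
  have hfx : f x = modelSizeBound (p x) (q x) x := hf x
  rw [hfx]
  exact natCast_mul_pow_mul_one_sub_rpow_lt_one (p x) (by linarith [hq x hx]) hx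

/-- Quantitative bound for the probabilistic proof of the exponential model property of
AUF₁⁻: with monotone polynomial-like `p, q ≥ 10x` and
`f x = 20 · 2^{2p(x)} · q(x) · ln 2 · x²`, for every `x ≥ 1`,
`x · (f(x)·2^{q(x)})^x · (1 - 2^{-p(x)})^{f(x)-x+1} < 1`. -/
theorem auf_model_size_bound (p q : ℕ → ℕ) (hpm : Monotone p) (hqm : Monotone q)
    (hp : ∀ x : ℕ, 1 ≤ x → 10 * x ≤ p x) (hq : ∀ x : ℕ, 1 ≤ x → 10 * x ≤ q x)
    (f : ℕ → ℝ)
    (hf : ∀ x : ℕ, f x = 20 * (2 : ℝ) ^ (2 * p x) * (q x : ℝ) * Real.log 2 * (x : ℝ) ^ 2) :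
    ∀ x : ℕ, 1 ≤ x →
      (x : ℝ) * (f x * (2 : ℝ) ^ (q x)) ^ x *
        (1 - (2 : ℝ) ^ (-(p x : ℝ))) ^ (f x - (x : ℝ) + 1) < 1 :=
  auf_model_size_bound_general p q hq f hf
end
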